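/- For every permutation martingale d, the success set S^∞[d] is μ-measurable and μ(S^∞[d]) = 0. -/

import Mathlib

open Filter MeasureTheory

/-- Binary strings. -/
abbrev Str := List Bool

/-- The standard length-lexicographic enumeration `s_0 = λ, s_1 = 0, s_2 = 1, s_3 = 00, …`
of binary strings: `stdEnum n` is the binary representation of `n+1` with the leading 1 removed. -/
def stdEnum (n : ℕ) : Str := ((n + 1).bits.dropLast).reverse

/-- The set Π of length-preserving permutations of `{0,1}*`. -/
structure LPPerm where
  toFun : Str → Str
  bij : Function.Bijective toFun
  lenPres : ∀ x, (toFun x).length = x.length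

/-- `g` is a prefix partial permutation: a finite list of pairwise distinct binary strings
with `|g(s_i)| = |s_i|` for all `i < |g|`. -/
def IsPPP (g : List Str) : Prop :=
  g.Nodup ∧ ∀ i (h : i < g.length), (g.get ⟨i, h⟩).length = (stdEnum i).length

/-- The finite set of binary strings of length `n`. -/
def strsOfLen (n : ℕ) : Finset Str :=
  (Finset.univ : Finset (Fin n → Bool)).image List.ofFn

/-- `free(g)`: strings of length `|s_{|g|}|` that do not occur as entries of `g`. -/
def freeSet (g : List Str) : Finset Str :=
  (strsOfLen (stdEnum g.length).length).filter (fun x => x ∉ g)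

/-- A permutation martingale: nonnegative and satisfying the averaging condition
`d(g) = (1/|free(g)|) · Σ_{x ∈ free(g)} d((g,x))` on prefix partial permutations. -/
def IsPermMartingale (d : List Str → ℝ) : Prop :=
  (∀ g, 0 ≤ d g) ∧
    ∀ g, IsPPP g → d g = (1 / ((freeSet g).card : ℝ)) * ∑ x ∈ freeSet g, d (g ++ [x])

/-- The cylinder measure `μ(g) = (∏_{k<n} 1/(2^k)!) · (2^n − m)!/(2^n)!` where
`2^n − 1 ≤ |g| < 2^{n+1} − 1` (so `n = log2(|g|+1)`) and `m = |g| − (2^n − 1)`. -/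
noncomputable def muPPP (g : List Str) : ℝ :=
  (∏ k ∈ Finset.range (Nat.log2 (g.length + 1)), (1 : ℝ) / (Nat.factorial (2 ^ k))) *
      (Nat.factorial
        (2 ^ Nat.log2 (g.length + 1) - (g.length - (2 ^ Nat.log2 (g.length + 1) - 1)))) /
      (Nat.factorial (2 ^ Nat.log2 (g.length + 1)))

/-- The cylinder of all permutations extending the prefix partial permutation `g`. -/
def cyl (g : List Str) : Set LPPerm :=
  {π | ∀ i (h : i < g.length), π.toFun (stdEnum i) = g.get ⟨i, h⟩}

/-- The σ-algebra `F_Π` generated by the cylinders. -/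
instance : MeasurableSpace LPPerm :=
  MeasurableSpace.generateFrom {S | ∃ g, IsPPP g ∧ S = cyl g}

/-- `π↾N = [π(s_0), …, π(s_{N−1})]`. -/
def LPPerm.restrict (π : LPPerm) (N : ℕ) : List Str :=
  (List.range N).map (fun i => π.toFun (stdEnum i))

/-- `d` succeeds on `π`: `limsup_{N→∞} d(π↾N) = ∞`. -/
def succeedsOn (d : List Str → ℝ) (π : LPPerm) : Prop :=
  ∀ C : ℝ, ∃ᶠ N in atTop, C < d (π.restrict N)


-- ===== auxiliary lemmas =====

lemma size_eq_log2 (n : ℕ) (h : n ≠ 0) : n.size = n.log2 + 1 := by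
  have h1 : n.size ≤ n.log2 + 1 := Nat.size_le.2 Nat.lt_log2_self
  have h2 : n.log2 < n.size := Nat.lt_size.2 (Nat.log2_self_le h)
  omega

lemma stdEnum_length (i : ℕ) : (stdEnum i).length = Nat.log2 (i + 1) := by
  have : (i+1).bits.length = (i+1).size := Nat.size_eq_bits_len (i+1)
  simp [stdEnum, List.length_dropLast, this, size_eq_log2 (i+1) (by omega)]

lemma bits_ne_nil {n : ℕ} (h : n ≠ 0) : n.bits ≠ [] := by
  intro he
  have := Nat.size_eq_bits_len n
  rw [he] at this
  simp at this
  have := Nat.lt_size.2 (show 2^0 ≤ n by omega)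
  omega

lemma bits_getLast : ∀ n : ℕ, (h : n ≠ 0) → n.bits.getLast (bits_ne_nil h) = true := by
  intro n
  induction n using Nat.strong_induction_on with
  | _ n ih =>
    intro h
    rcases Nat.even_or_odd n with ⟨m, hm⟩ | ⟨m, hm⟩
    · have hm0 : m ≠ 0 := by omega
      have hb : n.bits = false :: m.bits := by rw [show n = 2*m by omega]; exact Nat.bit0_bits m hm0
      rw [List.getLast_congr _ (by simp) hb]
      rw [List.getLast_cons (bits_ne_nil hm0)]
      exact ih m (by omega) hm0
    · have hb : n.bits = true :: m.bits := by rw [show n = 2*m+1 by omega]; exact Nat.bit1_bits m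
      by_cases hm0 : m = 0
      · subst hm0; rw [List.getLast_congr _ _ hb] <;> simp [Nat.zero_bits]
      · rw [List.getLast_congr _ (by simp) hb, List.getLast_cons (bits_ne_nil hm0)]
        exact ih m (by omega) hm0

lemma bits_inj : ∀ m n : ℕ, m.bits = n.bits → m = n := by
  intro m
  induction m using Nat.strong_induction_on with
  | _ m ih =>
    intro n h
    by_cases hm : m = 0
    · subst hm
      by_contra hn0
      have hn : n ≠ 0 := fun h' => hn0 (h'.symm)
      exact bits_ne_nil hn (h ▸ Nat.zero_bits)
    · by_cases hn : n = 0
      · exact absurd (hn ▸ h) (by simpa [Nat.zero_bits] using bits_ne_nil hm)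
      · have h1 : m.bodd = n.bodd := by rw [Nat.bodd_eq_bits_head, Nat.bodd_eq_bits_head, h]
        have h2 : m.div2.bits = n.div2.bits := by
          rw [Nat.div2_bits_eq_tail, Nat.div2_bits_eq_tail, h]
        have h3 : m.div2 = n.div2 := ih m.div2 (by rw [Nat.div2_val]; omega) _ h2
        have hm2 := Nat.bodd_add_div2 m
        have hn2 := Nat.bodd_add_div2 n
        rw [h1, h3] at hm2
        omega

lemma stdEnum_injective : Function.Injective stdEnum := by
  intro m n h
  have h' : (m+1).bits.dropLast = (n+1).bits.dropLast := by
    have := congrArg List.reverse h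
    simpa [stdEnum] using this
  have hm : (m+1).bits = (m+1).bits.dropLast ++ [true] := by
    conv_lhs => rw [← List.dropLast_append_getLast (bits_ne_nil (show m+1 ≠ 0 by omega))]
    rw [bits_getLast (m+1) (by omega)]
  have hn : (n+1).bits = (n+1).bits.dropLast ++ [true] := by
    conv_lhs => rw [← List.dropLast_append_getLast (bits_ne_nil (show n+1 ≠ 0 by omega))]
    rw [bits_getLast (n+1) (by omega)]
  have : (m+1).bits = (n+1).bits := by rw [hm, hn, h']
  have := bits_inj _ _ this
  omega

lemma log2_eq_of (n k : ℕ) (h1 : 2^n ≤ k) (h2 : k < 2^(n+1)) : Nat.log2 k = n := by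
  have hk : k ≠ 0 := by have : 0 < 2^n := Nat.two_pow_pos n; omega
  have ha : k.log2 < n + 1 := (Nat.log2_lt hk).2 h2
  have hb : ¬ (k.log2 < n) := fun hc => by
    have := Nat.lt_log2_self (n := k)
    have : k < 2^n := lt_of_lt_of_le this (Nat.pow_le_pow_right (by norm_num) (by omega))
    omega
  omega

lemma mem_strsOfLen {n : ℕ} {x : Str} : x ∈ strsOfLen n ↔ x.length = n := by
  simp only [strsOfLen, Finset.mem_image, Finset.mem_univ, true_and]
  constructor
  · rintro ⟨f, rfl⟩; simp
  · rintro rfl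
    exact ⟨fun i => x.get i, List.ofFn_get x⟩

lemma card_strsOfLen (n : ℕ) : (strsOfLen n).card = 2^n := by
  rw [strsOfLen, Finset.card_image_of_injective _ (List.ofFn_injective)]
  simp [Finset.card_univ]

def freeCard (N : ℕ) : ℕ := 2^(Nat.log2 (N+1)) - (N - (2^(Nat.log2 (N+1)) - 1))

lemma level_bounds (N : ℕ) : 2^(Nat.log2 (N+1)) - 1 ≤ N ∧ N + 1 < 2^(Nat.log2 (N+1) + 1) := by
  constructor
  · have := Nat.log2_self_le (show N+1 ≠ 0 by omega); omega
  · exact Nat.lt_log2_self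

lemma freeCard_pos (N : ℕ) : 0 < freeCard N := by
  have h := level_bounds N
  have h1 : (1:ℕ) ≤ 2^(Nat.log2 (N+1)) := Nat.one_le_two_pow
  unfold freeCard
  omega

noncomputable def muLen (N : ℕ) : ℝ :=
  (∏ k ∈ Finset.range (Nat.log2 (N + 1)), (1 : ℝ) / (Nat.factorial (2 ^ k))) *
      (Nat.factorial
        (2 ^ Nat.log2 (N + 1) - (N - (2 ^ Nat.log2 (N + 1) - 1)))) /
      (Nat.factorial (2 ^ Nat.log2 (N + 1)))

lemma muLen_zero : muLen 0 = 1 := by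
  have : Nat.log2 1 = 0 := by rw [Nat.log2]; simp; rfl
  simp [muLen, this]

lemma muLen_nonneg (N : ℕ) : 0 ≤ muLen N := by
  unfold muLen
  have : 0 ≤ ∏ k ∈ Finset.range (Nat.log2 (N + 1)), (1 : ℝ) / (Nat.factorial (2 ^ k)) :=
    Finset.prod_nonneg (fun k _ => by positivity)
  positivity

lemma muLen_succ (N : ℕ) : muLen N = freeCard N * muLen (N+1) := by
  obtain ⟨n, hn⟩ : ∃ n, Nat.log2 (N+1) = n := ⟨_, rfl⟩
  have hb := level_bounds N
  rw [hn] at hb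
  have hp : (1:ℕ) ≤ 2^n := Nat.one_le_two_pow
  have h2n : 2^(n+1) = 2*2^n := by rw [pow_succ]; ring
  obtain ⟨m, hm⟩ : ∃ m, N - (2^n - 1) = m := ⟨_, rfl⟩
  have hNm : N = 2^n - 1 + m := by omega
  have hmlt : m ≤ 2^n - 1 := by omega
  have hfc : freeCard N = 2^n - m := by rw [freeCard, hn, hm]
  by_cases hlast : m = 2^n - 1
  · -- level change
    have hN2 : N + 2 = 2^(n+1) := by omega
    have hlog : Nat.log2 (N+2) = n + 1 := log2_eq_of _ _ (le_of_eq hN2.symm)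
      (by have : (2:ℕ)^(n+1) < 2^(n+2) := Nat.pow_lt_pow_right (by norm_num) (by omega)
          omega)
    have hm' : (N+1) - (2^(n+1) - 1) = 0 := by omega
    rw [muLen, muLen, show N + 1 + 1 = N + 2 by ring, hlog, hn, hm, hm', Nat.sub_zero,
      hfc, hlast]
    have h1 : 2^n - (2^n - 1) = 1 := by omega
    rw [h1, Finset.prod_range_succ]
    have hfpos : (0:ℝ) < (Nat.factorial (2^n) : ℝ) := by exact_mod_cast Nat.factorial_pos _
    have hfpos2 : (0:ℝ) < (Nat.factorial (2^(n+1)) : ℝ) := by exact_mod_cast Nat.factorial_pos _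
    rw [Nat.factorial_one]
    push_cast
    field_simp
  · -- same level
    have hlog : Nat.log2 (N+2) = n := log2_eq_of _ _ (by omega) (by omega)
    have hm' : (N+1) - (2^n - 1) = m + 1 := by omega
    rw [muLen, muLen, show N + 1 + 1 = N + 2 by ring, hlog, hn, hm, hm', hfc]
    have hfact : (2^n - m) = (2^n - (m+1)) + 1 := by omega
    have h2 : Nat.factorial (2^n - m) = (2^n - m) * Nat.factorial (2^n - (m+1)) := by
      rw [hfact, Nat.factorial_succ, ← hfact]
    rw [h2]
    push_cast
    ring

lemma mem_freeSet {g : List Str} {x : Str} :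
    x ∈ freeSet g ↔ x.length = Nat.log2 (g.length + 1) ∧ x ∉ g := by
  rw [freeSet, Finset.mem_filter, mem_strsOfLen, stdEnum_length, and_comm, and_comm (a := _ ∉ _)]

lemma freeSet_card {g : List Str} (hg : IsPPP g) : (freeSet g).card = freeCard g.length := by
  classical
  obtain ⟨N, hN⟩ : ∃ N, g.length = N := ⟨_, rfl⟩
  obtain ⟨n, hn⟩ : ∃ n, Nat.log2 (N+1) = n := ⟨_, rfl⟩
  have hb := level_bounds N; rw [hn] at hb
  have hp : (1:ℕ) ≤ 2^n := Nat.one_le_two_pow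
  have key : (strsOfLen n).filter (fun x => x ∈ g) = (g.drop (2^n - 1)).toFinset := by
    ext x
    rw [Finset.mem_filter, mem_strsOfLen, List.mem_toFinset]
    constructor
    · rintro ⟨hxl, hxg⟩
      obtain ⟨⟨i, hi⟩, hix⟩ := List.mem_iff_get.1 hxg
      have hil : x.length = Nat.log2 (i+1) := by
        rw [← hix, hg.2 i hi, stdEnum_length]
      have h2i : 2^n ≤ i + 1 := by
        have := Nat.log2_self_le (show i+1 ≠ 0 by omega)
        rw [← hil, hxl] at this; exact this
      have hik : 2^n - 1 ≤ i := by omega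
      have hlt : i - (2^n - 1) < (g.drop (2^n - 1)).length := by
        rw [List.length_drop]; omega
      have : (g.drop (2^n - 1))[i - (2^n - 1)]'hlt = x := by
        rw [List.getElem_drop]
        rw [← hix]
        simp only [List.get_eq_getElem]
        congr 1
        omega
      rw [← this]
      exact List.getElem_mem _
    · intro hx
      obtain ⟨j, hj, hjx⟩ := List.mem_iff_getElem.1 hx
      rw [List.getElem_drop] at hjx
      have hjlen : 2^n - 1 + j < N := by rw [List.length_drop] at hj; omega
      have hxg : x ∈ g := by rw [← hjx]; exact List.getElem_mem _
      have hxl : x.length = Nat.log2 (2^n - 1 + j + 1) := by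
        rw [← hjx]
        have := hg.2 (2^n - 1 + j) (by omega)
        simp only [List.get_eq_getElem] at this
        rw [this, stdEnum_length]
      refine ⟨?_, hxg⟩
      rw [hxl, log2_eq_of n _ (by omega) (by omega)]
  have hnd : (g.drop (2^n - 1)).Nodup := (List.drop_sublist _ _).nodup hg.1
  have hcard2 : ((strsOfLen n).filter (fun x => x ∈ g)).card = N - (2^n - 1) := by
    rw [key, List.toFinset_card_of_nodup hnd, List.length_drop, hN]
  have hsplit := Finset.card_filter_add_card_filter_not
    (s := strsOfLen n) (p := fun x => x ∈ g)
  have hfree : (freeSet g).card = 2^n - (N - (2^n - 1)) := by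
    have : freeSet g = (strsOfLen n).filter (fun x => x ∉ g) := by
      rw [freeSet, stdEnum_length, hN, hn]
    rw [this]
    have h2 := hsplit
    rw [card_strsOfLen] at h2
    omega
  rw [hfree, freeCard, hN, hn]

lemma IsPPP_append {g : List Str} {x : Str} (hg : IsPPP g) (hx : x ∈ freeSet g) :
    IsPPP (g ++ [x]) := by
  obtain ⟨hxl, hxg⟩ := mem_freeSet.1 hx
  constructor
  · rw [List.nodup_append]
    exact ⟨hg.1, List.nodup_singleton x, by simpa using fun a ha (h : a = x) => hxg (h ▸ ha)⟩
  · intro i hi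
    rw [List.length_append, List.length_singleton] at hi
    by_cases hiN : i < g.length
    · have : (g ++ [x]).get ⟨i, by simpa using hi⟩ = g.get ⟨i, hiN⟩ := by
        simp [List.get_eq_getElem, List.getElem_append_left hiN]
      rw [this]; exact hg.2 i hiN
    · have hieq : i = g.length := by omega
      subst hieq
      have : (g ++ [x]).get ⟨g.length, by simpa using hi⟩ = x := by
        simp [List.get_eq_getElem]
      rw [this, hxl, stdEnum_length]

lemma IsPPP_take {g : List Str} (hg : IsPPP g) (j : ℕ) : IsPPP (g.take j) := by
  constructor
  · exact (List.take_sublist _ _).nodup hg.1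
  · intro i hi
    have hi' : i < g.length := lt_of_lt_of_le hi (by simp [List.length_take])
    have : (g.take j).get ⟨i, hi⟩ = g.get ⟨i, hi'⟩ := by
      simp [List.get_eq_getElem, List.getElem_take]
    rw [this]; exact hg.2 i hi'

lemma IsPPP_nil : IsPPP [] := ⟨List.nodup_nil, fun i h => by simp at h⟩

def extF (g : List Str) : ℕ → Finset (List Str)
  | 0 => {g}
  | (k+1) => (extF g k).biUnion (fun h => (freeSet h).image (fun x => h ++ [x]))

lemma extF_spec {g : List Str} (hg : IsPPP g) :
    ∀ k, ∀ h ∈ extF g k, IsPPP h ∧ h.length = g.length + k ∧ g <+: h := by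
  intro k
  induction k with
  | zero => intro h hh; simp [extF] at hh; subst hh; exact ⟨hg, rfl, List.prefix_refl _⟩
  | succ k ih =>
    intro h hh
    simp only [extF, Finset.mem_biUnion, Finset.mem_image] at hh
    obtain ⟨h', hh', x, hx, rfl⟩ := hh
    obtain ⟨hP, hL, hPre⟩ := ih h' hh'
    exact ⟨IsPPP_append hP hx, by simp [hL]; omega,
      hPre.trans (List.prefix_append h' [x])⟩

lemma extF_succ_mem {g h : List Str} {k : ℕ} (hh : h ∈ extF g k) {x : Str}
    (hx : x ∈ freeSet h) : h ++ [x] ∈ extF g (k+1) := by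
  simp only [extF, Finset.mem_biUnion, Finset.mem_image]
  exact ⟨h, hh, x, hx, rfl⟩

lemma extF_trans {g0 g : List Str} {j : ℕ} (hg : g ∈ extF g0 j) :
    ∀ k, extF g k ⊆ extF g0 (j + k) := by
  intro k
  induction k with
  | zero => intro h hh; simp [extF] at hh; subst hh; simpa using hg
  | succ k ih =>
    intro h hh
    simp only [extF, Finset.mem_biUnion, Finset.mem_image] at hh
    obtain ⟨h', hh', x, hx, rfl⟩ := hh
    exact extF_succ_mem (ih hh') hx

lemma extF_self {g : List Str} (hg : IsPPP g) : g ∈ extF [] g.length := by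
  induction g using List.reverseRecOn with
  | nil => simp [extF]
  | append_singleton g x ih =>
    have hgP : IsPPP g := by
      have := IsPPP_take hg g.length
      rwa [List.take_left] at this
    have hx : x ∈ freeSet g := by
      rw [mem_freeSet]
      constructor
      · have := hg.2 g.length (by simp)
        simp only [List.get_eq_getElem, List.getElem_concat_length] at this
        rw [this, stdEnum_length]
      · intro hxg
        have := hg.1
        rw [List.nodup_append] at this
        exact this.2.2 x hxg x (by simp) rfl
    rw [List.length_append, List.length_singleton]
    exact extF_succ_mem (ih hgP) hx

section Mart
variable {d : List Str → ℝ} (hd : IsPermMartingale d)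
include hd

lemma mart_step {h : List Str} (hh : IsPPP h) :
    ∑ x ∈ freeSet h, d (h ++ [x]) = ((freeSet h).card : ℝ) * d h := by
  have hc : (0:ℝ) < ((freeSet h).card : ℝ) := by
    rw [freeSet_card hh]; exact_mod_cast freeCard_pos h.length
  have := hd.2 h hh
  rw [this]
  field_simp

lemma sum_extF {g : List Str} (hg : IsPPP g) (k : ℕ) :
    ∑ h ∈ extF g k, muLen h.length * d h = muLen g.length * d g := by
  induction k with
  | zero => simp [extF]
  | succ k ih =>
    rw [extF]
    rw [Finset.sum_biUnion]
    · rw [← ih]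
      apply Finset.sum_congr rfl
      intro h hh
      obtain ⟨hP, hL, _⟩ := extF_spec hg k h hh
      rw [Finset.sum_image (by intro x _ y _ hxy; simpa using hxy)]
      have : ∀ x ∈ freeSet h, muLen (h ++ [x]).length * d (h ++ [x])
          = muLen (h.length + 1) * d (h ++ [x]) := by
        intro x _; simp
      rw [Finset.sum_congr rfl this, ← Finset.mul_sum, mart_step hd hP,
        freeSet_card hP, ← mul_assoc, mul_comm (muLen (h.length+1)), ← muLen_succ]
    · intro a ha b hb hab
      simp only [Finset.mem_coe] at ha hb
      apply Finset.disjoint_left.2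
      intro c hca hcb
      simp only [Finset.mem_image] at hca hcb
      obtain ⟨x, _, hx⟩ := hca
      obtain ⟨y, _, hy⟩ := hcb
      have hL : a.length = b.length := by
        rw [(extF_spec hg k a ha).2.1, (extF_spec hg k b hb).2.1]
      exact hab (List.append_inj (hx.trans hy.symm) hL).1

lemma antichain_sum (F : Finset (List Str)) (N : ℕ)
    (hF : ∀ g ∈ F, IsPPP g ∧ g.length ≤ N)
    (hanti : ∀ g ∈ F, ∀ g' ∈ F, g <+: g' → g = g') :
    ∑ g ∈ F, muLen g.length * d g ≤ d [] := by
  classical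
  have hsub : F.biUnion (fun g => extF g (N - g.length)) ⊆ extF [] N := by
    intro h hh
    simp only [Finset.mem_biUnion] at hh
    obtain ⟨g, hgF, hg⟩ := hh
    have h1 := extF_trans (extF_self (hF g hgF).1) (N - g.length) hg
    rwa [Nat.add_sub_cancel' (hF g hgF).2] at h1
  have hdisj : (↑F : Set (List Str)).PairwiseDisjoint (fun g => extF g (N - g.length)) := by
    intro a ha b hb hab
    simp only [Finset.mem_coe] at ha hb
    apply Finset.disjoint_left.2
    intro c hca hcb
    have hpa := (extF_spec (hF a ha).1 _ c hca).2.2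
    have hpb := (extF_spec (hF b hb).1 _ c hcb).2.2
    rcases List.prefix_or_prefix_of_prefix hpa hpb with h | h
    · exact hab (hanti a ha b hb h)
    · exact hab (hanti b hb a ha h).symm
  calc ∑ g ∈ F, muLen g.length * d g
      = ∑ g ∈ F, ∑ h ∈ extF g (N - g.length), muLen h.length * d h := by
        apply Finset.sum_congr rfl
        intro g hg
        rw [sum_extF hd (hF g hg).1]
    _ = ∑ h ∈ F.biUnion (fun g => extF g (N - g.length)), muLen h.length * d h :=
        (Finset.sum_biUnion hdisj).symm
    _ ≤ ∑ h ∈ extF [] N, muLen h.length * d h := by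
        apply Finset.sum_le_sum_of_subset_of_nonneg hsub
        intro h _ _
        exact mul_nonneg (muLen_nonneg _) (hd.1 h)
    _ = d [] := by
        rw [sum_extF hd IsPPP_nil]
        simp [muLen_zero]

end Mart

lemma muPPP_eq_muLen (g : List Str) : muPPP g = muLen g.length := rfl

lemma restrict_length (π : LPPerm) (N : ℕ) : (π.restrict N).length = N := by
  simp [LPPerm.restrict]

lemma restrict_get (π : LPPerm) (N i : ℕ) (h : i < (π.restrict N).length) :
    (π.restrict N).get ⟨i, h⟩ = π.toFun (stdEnum i) := by
  simp [LPPerm.restrict]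

lemma restrict_isPPP (π : LPPerm) (N : ℕ) : IsPPP (π.restrict N) := by
  constructor
  · exact List.Nodup.map (fun a b hab => stdEnum_injective (π.bij.1 hab)) List.nodup_range
  · intro i h
    rw [restrict_get, π.lenPres]

lemma mem_cyl_restrict (π : LPPerm) (N : ℕ) : π ∈ cyl (π.restrict N) :=
  fun i h => (restrict_get π N i h).symm

lemma restrict_eq_of_mem_cyl {π : LPPerm} {g : List Str} (h : π ∈ cyl g) :
    π.restrict g.length = g := by
  apply List.ext_get (by simp [restrict_length])
  intro n h1 h2
  rw [restrict_get]
  exact h n h2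

lemma restrict_take (π : LPPerm) {j N : ℕ} (h : j ≤ N) :
    (π.restrict N).take j = π.restrict j := by
  simp [LPPerm.restrict, ← List.map_take, List.take_range, Nat.min_eq_left h]

open Classical in
noncomputable def stopF (d : List Str → ℝ) (C : ℝ) (N : ℕ) : Finset (List Str) :=
  (Finset.range (N+1)).biUnion (fun k => (extF [] k).filter
    (fun g => C < d g ∧ ∀ j < g.length, d (g.take j) ≤ C))

lemma mem_stopF {d : List Str → ℝ} {C : ℝ} {N : ℕ} {g : List Str} :
    g ∈ stopF d C N ↔
      IsPPP g ∧ g.length ≤ N ∧ C < d g ∧ ∀ j < g.length, d (g.take j) ≤ C := by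
  classical
  simp only [stopF, Finset.mem_biUnion, Finset.mem_range, Finset.mem_filter]
  constructor
  · rintro ⟨k, hk, hg, h1, h2⟩
    obtain ⟨hP, hL, -⟩ := extF_spec IsPPP_nil k g hg
    simp only [List.length_nil, Nat.zero_add] at hL
    exact ⟨hP, by omega, h1, h2⟩
  · rintro ⟨hP, hL, h1, h2⟩
    exact ⟨g.length, by omega, extF_self hP, h1, h2⟩

lemma stopF_mono {d : List Str → ℝ} {C : ℝ} {N N' : ℕ} (h : N ≤ N') :
    stopF d C N ⊆ stopF d C N' := by
  intro g hg
  rw [mem_stopF] at hg ⊢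
  exact ⟨hg.1, hg.2.1.trans h, hg.2.2⟩

lemma stopF_antichain {d : List Str → ℝ} {C : ℝ} {N : ℕ} :
    ∀ g ∈ stopF d C N, ∀ g' ∈ stopF d C N, g <+: g' → g = g' := by
  intro g hg g' hg' hpre
  rw [mem_stopF] at hg hg'
  by_contra hne
  have hlt : g.length < g'.length := by
    cases lt_or_eq_of_le hpre.length_le with
    | inl h => exact h
    | inr h => exact absurd (hpre.eq_of_length h) hne
  have htake : g'.take g.length = g := (List.prefix_iff_eq_take.1 hpre).symm
  have := hg'.2.2.2 g.length hlt
  rw [htake] at this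
  exact absurd hg.2.2.1 (not_lt.2 this)


/-- for every permutation martingale `d`, the success set `S^∞[d]` is
μ-measurable and `μ(S^∞[d]) = 0`. -/
theorem stmt8 (μ : Measure LPPerm) (hprob : IsProbabilityMeasure μ)
    (hμ : ∀ g, IsPPP g → μ (cyl g) = ENNReal.ofReal (muPPP g))
    (d : List Str → ℝ) (hd : IsPermMartingale d) :
    MeasurableSet {π : LPPerm | succeedsOn d π} ∧ μ {π : LPPerm | succeedsOn d π} = 0 := by
  classical
  set W : ℕ → ℕ → Set LPPerm := fun k N => ⋃ g ∈ stopF d ((k:ℝ)+1) N, cyl g with hW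
  have hWmeas : ∀ k N, MeasurableSet (W k N) := by
    intro k N
    apply Set.Finite.measurableSet_biUnion (Finset.finite_toSet _)
    intro g hg
    exact MeasurableSpace.measurableSet_generateFrom
      ⟨g, (mem_stopF.1 (Finset.mem_coe.1 hg)).1, rfl⟩
  have hSeq : {π : LPPerm | succeedsOn d π} = ⋂ (k : ℕ), ⋃ (N : ℕ), W k N := by
    ext π
    simp only [Set.mem_setOf_eq, Set.mem_iInter, Set.mem_iUnion]
    constructor
    · intro hπ k
      have hex : ∃ M, ((k:ℝ)+1) < d (π.restrict M) := (hπ ((k:ℝ)+1)).exists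
      set M0 := Nat.find hex with hM0
      refine ⟨M0, ?_⟩
      have hgin : π.restrict M0 ∈ stopF d ((k:ℝ)+1) M0 := by
        rw [mem_stopF]
        refine ⟨restrict_isPPP π M0, by rw [restrict_length], ?_, ?_⟩
        · exact Nat.find_spec hex
        · intro j hj
          rw [restrict_length] at hj
          rw [restrict_take π (le_of_lt hj)]
          exact not_lt.1 (Nat.find_min hex hj)
      exact Set.mem_biUnion hgin (mem_cyl_restrict π M0)
    · intro hπ C
      rw [frequently_atTop]
      intro N0
      obtain ⟨k, hk⟩ := exists_nat_gt
        (max C ((Finset.range (N0+1)).sup' ⟨0, by simp⟩ (fun j => d (π.restrict j))))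
      obtain ⟨N, hN⟩ := hπ k
      simp only [hW, Set.mem_iUnion, exists_prop] at hN
      obtain ⟨g, hgF, hgc⟩ := hN
      rw [mem_stopF] at hgF
      have hres : π.restrict g.length = g := restrict_eq_of_mem_cyl hgc
      have hdg : ((k:ℝ)+1) < d (π.restrict g.length) := by rw [hres]; exact hgF.2.2.1
      have hCk : C < (k:ℝ) := lt_of_le_of_lt (le_max_left _ _) hk
      have hsup : ∀ j ≤ N0, d (π.restrict j) < (k:ℝ) := by
        intro j hj
        refine lt_of_le_of_lt ?_ (lt_of_le_of_lt (le_max_right _ _) hk)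
        exact Finset.le_sup' (fun j => d (π.restrict j)) (Finset.mem_range.2 (by omega))
      have hML : N0 < g.length := by
        by_contra hle
        have := hsup g.length (by omega)
        linarith
      exact ⟨g.length, by omega, by linarith⟩
  have hbound : ∀ k : ℕ,
      μ {π : LPPerm | succeedsOn d π} ≤ ENNReal.ofReal (d [] / ((k:ℝ)+1)) := by
    intro k
    have h1 : μ {π : LPPerm | succeedsOn d π} ≤ μ (⋃ N, W k N) := by
      rw [hSeq]; exact measure_mono (Set.iInter_subset _ k)
    have hmono : Monotone (W k) := by
      intro N N' h
      exact Set.biUnion_subset_biUnion_left (stopF_mono h)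
    have h2 : μ (⋃ N, W k N) = ⨆ N, μ (W k N) :=
      (hmono.directed_le).measure_iUnion
    rw [h2] at h1
    refine le_trans h1 (iSup_le fun N => ?_)
    have h3 : μ (W k N) ≤ ∑ g ∈ stopF d ((k:ℝ)+1) N, μ (cyl g) :=
      measure_biUnion_finset_le _ _
    have h4 : ∑ g ∈ stopF d ((k:ℝ)+1) N, μ (cyl g)
        = ENNReal.ofReal (∑ g ∈ stopF d ((k:ℝ)+1) N, muLen g.length) := by
      rw [ENNReal.ofReal_sum_of_nonneg (fun g _ => muLen_nonneg _)]
      apply Finset.sum_congr rfl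
      intro g hg
      rw [hμ g (mem_stopF.1 hg).1, muPPP_eq_muLen]
    have h5 : ∑ g ∈ stopF d ((k:ℝ)+1) N, muLen g.length ≤ d [] / ((k:ℝ)+1) := by
      have hkpos : (0:ℝ) < (k:ℝ)+1 := by positivity
      rw [le_div_iff₀ hkpos]
      calc (∑ g ∈ stopF d ((k:ℝ)+1) N, muLen g.length) * ((k:ℝ)+1)
          = ∑ g ∈ stopF d ((k:ℝ)+1) N, muLen g.length * ((k:ℝ)+1) := by
            rw [Finset.sum_mul]
        _ ≤ ∑ g ∈ stopF d ((k:ℝ)+1) N, muLen g.length * d g := by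
            apply Finset.sum_le_sum
            intro g hg
            exact mul_le_mul_of_nonneg_left
              (le_of_lt (mem_stopF.1 hg).2.2.1) (muLen_nonneg _)
        _ ≤ d [] := antichain_sum hd _ N
            (fun g hg => ⟨(mem_stopF.1 hg).1, (mem_stopF.1 hg).2.1⟩)
            stopF_antichain
    exact le_trans h3 (h4 ▸ ENNReal.ofReal_le_ofReal h5)
  have htend : Tendsto (fun k : ℕ => ENNReal.ofReal (d [] / ((k:ℝ)+1))) atTop (nhds 0) := by
    have hreal : Tendsto (fun k : ℕ => d [] / ((k:ℝ)+1)) atTop (nhds 0) := by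
      have h1 := tendsto_const_div_atTop_nhds_zero_nat (d [])
      have h2 := h1.comp (tendsto_add_atTop_nat 1)
      have h3 : (fun k : ℕ => d [] / ((k:ℝ)+1))
          = (fun n : ℕ => d [] / (n:ℝ)) ∘ (fun a : ℕ => a + 1) := by
        funext a; simp [Function.comp, Nat.cast_add]
      rw [h3]; exact h2
    simpa using ENNReal.tendsto_ofReal hreal
  have hzero : μ {π : LPPerm | succeedsOn d π} = 0 :=
    le_antisymm (ge_of_tendsto' htend hbound) zero_le
  refine ⟨?_, hzero⟩
  rw [hSeq]
  exact MeasurableSet.iInter (fun k => MeasurableSet.iUnion (fun N => hWmeas k N))
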